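/- The supremum in the definition of the shell index is attained: for every x ∈ [0,1], x ∈ K_{δ_x(w)}(w), i.e. δ_x(w) = max{κ : x ∈ K_κ(w)}. -/

import Mathlib

open MeasureTheory Set Filter

/-- A graphon: symmetric measurable `w : [0,1]² → [0,1]` (stated on all of ℝ²). -/
def Graphon (w : ℝ → ℝ → ℝ) : Prop :=
  Measurable (Function.uncurry w) ∧ (∀ x y, w x y = w y x) ∧
    ∀ x y, w x y ∈ Set.Icc (0 : ℝ) 1

/-- Degree of `x` restricted to `K`: `d_w^K(x) = ∫_K w(x,y) dy`. -/
noncomputable def degK (w : ℝ → ℝ → ℝ) (K : Set ℝ) (x : ℝ) : ℝ := ∫ y in K, w x y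

/-- Iterated peeling sets: `coreIter w κ n = K^{n+1}_κ(w)` (so index 0 is `K¹`). -/
noncomputable def coreIter (w : ℝ → ℝ → ℝ) (κ : ℝ) : ℕ → Set ℝ
  | 0 => {x ∈ Set.Icc (0 : ℝ) 1 | κ ≤ degK w (Set.Icc 0 1) x}
  | n + 1 => {x ∈ coreIter w κ n | κ ≤ degK w (coreIter w κ n) x}

/-- The κ-core `K_κ(w) = ⋂ₙ K^n_κ(w)`. -/
noncomputable def core (w : ℝ → ℝ → ℝ) (κ : ℝ) : Set ℝ := ⋂ n, coreIter w κ n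

/-- Shell index `δ_x(w) = sup {κ : x ∈ K_κ(w)}`. -/
noncomputable def shell (w : ℝ → ℝ → ℝ) (x : ℝ) : ℝ := sSup {κ | x ∈ core w κ}

/-- Degeneracy `δ(w) = sup {κ : |K_κ(w)| > 0}`. -/
noncomputable def degen (w : ℝ → ℝ → ℝ) : ℝ := sSup {κ | 0 < volume (core w κ)}

/-- Cut-norm distance `d_□`. -/
noncomputable def cutDist (w w' : ℝ → ℝ → ℝ) : ℝ :=
  sSup {r | ∃ S T : Set ℝ, MeasurableSet S ∧ MeasurableSet T ∧
    S ⊆ Set.Icc 0 1 ∧ T ⊆ Set.Icc 0 1 ∧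
    r = |∫ x in S, ∫ y in T, (w x y - w' x y)|}

/-- A measure-preserving map of `[0,1]`. -/
def MPMap (σ : ℝ → ℝ) : Prop :=
  Measurable σ ∧ Set.MapsTo σ (Set.Icc 0 1) (Set.Icc 0 1) ∧
    ∀ A : Set ℝ, MeasurableSet A → A ⊆ Set.Icc 0 1 →
      volume (σ ⁻¹' A ∩ Set.Icc 0 1) = volume A

/-- Cut metric `δ_□(w,w') = inf_σ d_□(w^σ, w')`. -/
noncomputable def cutMetric (w w' : ℝ → ℝ → ℝ) : ℝ :=
  sInf {r | ∃ σ : ℝ → ℝ, MPMap σ ∧ r = cutDist (fun x y => w (σ x) (σ y)) w'}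

open Topology

section ShellAux

variable {w : ℝ → ℝ → ℝ}

lemma aux_meas_slice (hw : Graphon w) (x : ℝ) : Measurable (w x) :=
  hw.1.comp measurable_prodMk_left

lemma aux_intOn (hw : Graphon w) (x : ℝ) {K : Set ℝ} (hK : K ⊆ Set.Icc 0 1) :
    IntegrableOn (w x) K := by
  have h1 : IntegrableOn (w x) (Set.Icc 0 1) := by
    refine Integrable.mono' (integrable_const 1) (aux_meas_slice hw x).aestronglyMeasurable ?_
    filter_upwards with y
    rw [Real.norm_eq_abs, abs_le]
    exact ⟨by linarith [(hw.2.2 x y).1], (hw.2.2 x y).2⟩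
  exact h1.mono_set hK

lemma degK_nonneg (hw : Graphon w) (K : Set ℝ) (x : ℝ) : 0 ≤ degK w K x :=
  integral_nonneg fun y => (hw.2.2 x y).1

lemma degK_le_one (hw : Graphon w) (x : ℝ) : degK w (Set.Icc 0 1) x ≤ 1 := by
  have : degK w (Set.Icc 0 1) x ≤ ∫ _y in Set.Icc (0:ℝ) 1, (1:ℝ) :=
    setIntegral_mono_on (aux_intOn hw x subset_rfl) (integrableOn_const (by simp) (by simp))
      measurableSet_Icc fun y _ => (hw.2.2 x y).2
  simpa using this

lemma degK_mono (hw : Graphon w) (x : ℝ) {K K' : Set ℝ} (hKK' : K ⊆ K')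
    (hK' : K' ⊆ Set.Icc 0 1) : degK w K x ≤ degK w K' x := by
  refine setIntegral_mono_set (aux_intOn hw x hK') ?_ (HasSubset.Subset.eventuallyLE hKK')
  filter_upwards with y using (hw.2.2 x y).1

lemma coreIter_subset_Icc (w : ℝ → ℝ → ℝ) (κ : ℝ) :
    ∀ n, coreIter w κ n ⊆ Set.Icc 0 1
  | 0 => fun x hx => hx.1
  | n + 1 => fun x hx => coreIter_subset_Icc w κ n hx.1

lemma degK_measurable (hw : Graphon w) {K : Set ℝ} (_hK : MeasurableSet K) :
    Measurable (degK w K) :=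
  (hw.1.stronglyMeasurable.integral_prod_right').measurable

lemma coreIter_measurable (hw : Graphon w) (κ : ℝ) :
    ∀ n, MeasurableSet (coreIter w κ n)
  | 0 =>
    measurableSet_Icc.inter
      (measurableSet_le measurable_const (degK_measurable hw measurableSet_Icc))
  | n + 1 =>
    (coreIter_measurable hw κ n).inter
      (measurableSet_le measurable_const (degK_measurable hw (coreIter_measurable hw κ n)))

lemma coreIter_antitone (hw : Graphon w) {κ κ' : ℝ} (h : κ ≤ κ') :
    ∀ n, coreIter w κ' n ⊆ coreIter w κ n
  | 0 => fun x hx => ⟨hx.1, le_trans h hx.2⟩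
  | n + 1 => fun x hx =>
    ⟨coreIter_antitone hw h n hx.1,
      le_trans h (le_trans hx.2
        (degK_mono hw x (coreIter_antitone hw h n) (coreIter_subset_Icc w κ n)))⟩

lemma coreIter_iInter (hw : Graphon w) (δ : ℝ) :
    ∀ n, (⋂ m : ℕ, coreIter w (δ - 1 / (m + 1)) n) ⊆ coreIter w δ n := by
  set κs : ℕ → ℝ := fun m => δ - 1 / (m + 1) with hκs
  have hκlt : ∀ m, κs m ≤ δ := fun m => by
    have : (0:ℝ) < 1 / (m + 1) := by positivity
    simp only [hκs]; linarith
  have hκmono : Monotone κs := fun a b hab => by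
    have : (1:ℝ) / (b + 1) ≤ 1 / (a + 1) := by
      apply one_div_le_one_div_of_le (by positivity)
      exact_mod_cast Nat.succ_le_succ hab
    simp only [hκs]; linarith
  have hκtend : Tendsto κs atTop (𝓝 δ) := by
    have h : Tendsto (fun n : ℕ => 1 / ((n : ℝ) + 1)) atTop (𝓝 0) :=
      tendsto_one_div_add_atTop_nhds_zero_nat
    have : Tendsto (fun m : ℕ => δ - 1 / (m + 1)) atTop (𝓝 (δ - 0)) :=
      tendsto_const_nhds.sub h
    simpa [hκs] using this
  intro n
  induction n with
  | zero =>
    intro x hx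
    have h0 := Set.mem_iInter.1 hx
    refine ⟨(h0 0).1, ?_⟩
    exact le_of_tendsto hκtend (Filter.Eventually.of_forall fun m => (h0 m).2)
  | succ n ih =>
    intro x hx
    have h0 := Set.mem_iInter.1 hx
    have hxn : x ∈ coreIter w δ n :=
      ih (Set.mem_iInter.2 fun m => (h0 m).1)
    refine ⟨hxn, ?_⟩
    have hanti : Antitone fun m => coreIter w (κs m) n :=
      fun a b hab => coreIter_antitone hw (hκmono hab) n
    have htend : Tendsto (fun m => degK w (coreIter w (κs m) n) x) atTop
        (𝓝 (degK w (⋂ m, coreIter w (κs m) n) x)) := by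
      refine tendsto_setIntegral_of_antitone (fun m => coreIter_measurable hw (κs m) n)
        hanti ⟨0, aux_intOn hw x (coreIter_subset_Icc w (κs 0) n)⟩
    have hδle : δ ≤ degK w (⋂ m, coreIter w (κs m) n) x :=
      le_of_tendsto_of_tendsto hκtend htend
        (Filter.Eventually.of_forall fun m => (h0 m).2)
    refine le_trans hδle (degK_mono hw x ?_ (coreIter_subset_Icc w δ n))
    exact fun y hy => ih (Set.mem_iInter.2 fun m => Set.mem_iInter.1 hy m)

end ShellAux

theorem stmt10 (w : ℝ → ℝ → ℝ) (hw : Graphon w) (x : ℝ)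
    (hx : x ∈ Set.Icc (0 : ℝ) 1) :
    IsGreatest {κ | x ∈ core w κ} (shell w x) := by
  have h0 : (0:ℝ) ∈ {κ | x ∈ core w κ} := by
    refine Set.mem_iInter.2 fun n => ?_
    induction n with
    | zero => exact ⟨hx, degK_nonneg hw _ x⟩
    | succ n ih => exact ⟨ih, degK_nonneg hw _ x⟩
  have hbdd : BddAbove {κ | x ∈ core w κ} := by
    refine ⟨1, fun κ hκ => ?_⟩
    have h1 : x ∈ coreIter w κ 0 := Set.mem_iInter.1 hκ 0
    exact le_trans h1.2 (degK_le_one hw x)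
  constructor
  · refine Set.mem_iInter.2 fun n => ?_
    apply coreIter_iInter hw (shell w x) n
    refine Set.mem_iInter.2 fun m => ?_
    have hlt : shell w x - 1 / (m + 1) < sSup {κ | x ∈ core w κ} := by
      have : (0:ℝ) < 1 / (m + 1) := by positivity
      unfold shell; linarith
    obtain ⟨κ, hκS, hκlt⟩ := exists_lt_of_lt_csSup ⟨0, h0⟩ hlt
    exact coreIter_antitone hw hκlt.le n (Set.mem_iInter.1 hκS n)
  · exact fun κ hκ => le_csSup hbdd hκ
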